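/- arXiv:2511.21943 — 5 statements merged into one kernel-verified Lean document; each statement's English description precedes it below -/
import Mathlib

section
/- For integers n > k ≥ j ≥ 0, the following identity of real numbers holds: ∑_{m=j}^{k} (-1)^{j+m} / ( (m-j)! · (k-m)! · (m+1) · (n-m) ) = (1/((k-j)!·(n+1))) · ( j!·(k-j)!/(k+1)! + (-1)^{k-j} · (n-k-1)!·(k-j)!/(n-j)! ). (The two terms in brackets are the Beta function values B(j+1, k-j+1) and B(n-k, k-j+1), respectively.) -/
/-!
Write `m = j + i`, `d = k - j` and `n = k + 1 + q`. The partial fraction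
`1 / ((m + 1) (n - m)) = (1 / (n + 1)) (1 / (m + 1) + 1 / (n - m))` together with
`1 / (i! (d - i)!) = C(d, i) / d!` splits the sum into two alternating binomial sums of the form
`S(d, q) = ∑ᵢ (-1)ⁱ C(d, i) / (q + i + 1)`, the second one after reflecting `i ↦ d - i`.
Pascal's rule gives `S(d + 1, q) = S(d, q) - S(d, q + 1)`, and induction on `d` then yields
`S(d, q) = d! q! / (d + q + 1)! = B(q + 1, d + 1)`.
-/

open Finset Nat

theorem alternating_sum_range_succ_choose_mul {R : Type*} [CommRing R] (f : ℕ → R) (d : ℕ) :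
    ∑ i ∈ range (d + 2), (-1) ^ i * ((d + 1).choose i : R) * f i
      = ∑ i ∈ range (d + 1), (-1) ^ i * (d.choose i : R) * (f i - f (i + 1)) := by
  have hlast : ∑ i ∈ range (d + 2), (-1) ^ i * (d.choose i : R) * f i
      = ∑ i ∈ range (d + 1), (-1) ^ i * (d.choose i : R) * f i := by
    simp [sum_range_succ _ (d + 1)]
  simp only [mul_sub, sum_sub_distrib, ← hlast]
  rw [sum_range_succ', sum_range_succ' _ (d + 1)]
  simp [choose_succ_succ', pow_succ, add_mul, mul_add, sum_add_distrib]
  ring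

section

variable {K : Type*} [Field K] [CharZero K]

theorem alternating_sum_range_choose_div_add (d q : ℕ) :
    ∑ i ∈ range (d + 1), (-1) ^ i * (d.choose i : K) / (q + i + 1)
      = d ! * q ! / (d + q + 1)! := by
  induction d generalizing q with
  | zero =>
    simp only [zero_add, range_one, sum_singleton, pow_zero, choose_self, cast_one, cast_zero,
      factorial_zero, factorial_succ]
    have hq : (q : K) + 1 ≠ 0 := by exact_mod_cast succ_ne_zero q
    have hqf : (q ! : K) ≠ 0 := by exact_mod_cast factorial_ne_zero q
    push_cast
    field_simp
    ring
  | succ d ih =>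
    have hpascal : ∑ i ∈ range (d + 2), (-1) ^ i * ((d + 1).choose i : K) / (q + i + 1)
        = ∑ i ∈ range (d + 1), (-1) ^ i * (d.choose i : K) / (q + i + 1)
          - ∑ i ∈ range (d + 1), (-1) ^ i * (d.choose i : K) / ((q + 1 : ℕ) + i + 1) := by
      simp only [div_eq_mul_inv, alternating_sum_range_succ_choose_mul, mul_sub,
        sum_sub_distrib]
      push_cast
      ring_nf
    rw [hpascal, ih, ih, show d + (q + 1) + 1 = d + q + 1 + 1 by ring,
      show d + 1 + q + 1 = d + q + 1 + 1 by ring,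
      factorial_succ (d + q + 1), factorial_succ q, factorial_succ d]
    have hf : ((d + q + 1)! : K) ≠ 0 := by exact_mod_cast factorial_ne_zero _
    have hs : ((d + q + 1 + 1 : ℕ) : K) ≠ 0 := by exact_mod_cast succ_ne_zero (d + q + 1)
    push_cast at hs ⊢
    field_simp
    ring

theorem alternating_sum_range_choose_div_sub (d q : ℕ) :
    ∑ i ∈ range (d + 1), (-1) ^ i * (d.choose i : K) / ((d + q + 1 : ℕ) - i)
      = (-1) ^ d * (d ! * q ! / (d + q + 1)!) := by
  rw [← alternating_sum_range_choose_div_add, mul_sum, ← sum_range_reflect]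
  refine sum_congr rfl fun i hi => ?_
  have hid : i ≤ d := mem_range_succ_iff.mp hi
  rw [add_tsub_cancel_right, choose_symm hid, pow_sub₀ _ (by norm_num) hid, ← inv_pow,
    inv_neg_one, cast_sub hid]
  push_cast
  ring_nf

end

/-- For integers `n > k ≥ j ≥ 0`,
`∑_{m=j}^{k} (-1)^{j+m} / ((m-j)!(k-m)!(m+1)(n-m))
  = (1/((k-j)!(n+1))) ⬝ ( j!(k-j)!/(k+1)! + (-1)^{k-j} (n-k-1)!(k-j)!/(n-j)! )`. -/
theorem beta_identity (n k j : ℕ) (hjk : j ≤ k) (hkn : k < n) :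
    ∑ m ∈ Finset.Icc j k,
        (-1 : ℝ) ^ (j + m) /
          (((m - j).factorial : ℝ) * ((k - m).factorial : ℝ) * ((m : ℝ) + 1) * ((n : ℝ) - m))
      = (1 / (((k - j).factorial : ℝ) * ((n : ℝ) + 1))) *
          ((j.factorial : ℝ) * ((k - j).factorial : ℝ) / ((k + 1).factorial : ℝ)
            + (-1 : ℝ) ^ (k - j) *
                (((n - k - 1).factorial : ℝ) * ((k - j).factorial : ℝ) / ((n - j).factorial : ℝ))) := by
  obtain ⟨d, rfl⟩ := exists_add_of_le hjk
  obtain ⟨q, rfl⟩ := Nat.exists_eq_add_of_lt hkn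
  set c : ℝ := 1 / (d ! * ((j + d + q + 1 : ℕ) + 1))
  have hsummand : ∀ i ∈ range (d + 1),
      (-1 : ℝ) ^ (j + (j + i)) / (((j + i - j)! : ℝ) * ((j + d - (j + i))! : ℝ)
          * (((j + i : ℕ) : ℝ) + 1) * (((j + d + q + 1 : ℕ) : ℝ) - (j + i : ℕ)))
        = c * ((-1) ^ i * (d.choose i : ℝ) / (j + i + 1))
          + c * ((-1) ^ i * (d.choose i : ℝ) / ((d + q + 1 : ℕ) - i)) := by
    intro i hi
    have hid : i ≤ d := mem_range_succ_iff.mp hi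
    have hsub : (((j + d + q + 1 : ℕ) : ℝ) - (j + i : ℕ)) = (d + q + 1 : ℕ) - (i : ℝ) := by
      push_cast; ring
    have ha : ((j + i : ℕ) : ℝ) + 1 ≠ 0 := by positivity
    have hb : ((d + q + 1 : ℕ) : ℝ) - i ≠ 0 :=
      (sub_pos.2 (by exact_mod_cast (by omega : i < d + q + 1))).ne'
    rw [← add_assoc, pow_add, Even.neg_one_pow ⟨j, rfl⟩, one_mul, add_tsub_cancel_left,
      add_tsub_add_eq_tsub_left, cast_choose ℝ hid, hsub]
    simp only [c]
    push_cast at ha hb ⊢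
    field_simp
    ring
  rw [← Ico_add_one_right_eq_Icc, sum_Ico_eq_sum_range, show j + d + 1 - j = d + 1 by omega,
    sum_congr rfl hsummand, sum_add_distrib, ← mul_sum, ← mul_sum,
    alternating_sum_range_choose_div_add, alternating_sum_range_choose_div_sub]
  simp only [add_tsub_cancel_left, show j + d + q + 1 - (j + d) - 1 = q by omega,
    show j + d + q + 1 - j = d + q + 1 by omega, show d + j + 1 = j + d + 1 by ring]
  ring
end

section
/- For integers n > k ≥ j ≥ 0, the real number S := ∑_{m=j}^{k} (-1)^{j+m} / ( (m-j)! · (k-m)! · (m+1) · (n-m) ) is strictly negative if and only if k−j is odd and j > n−k−1. (Equivalently: if k−j is even then S > 0; if k−j is odd and j ≤ n−k−1 then S ≥ 0; if k−j is odd and j > n−k−1 then S < 0.) -/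
/-!
With `d = k - j` and `m = j + t`, the partial fractions
`1 / ((m + 1) (n - m)) = (1 / (m + 1) + 1 / (n - m)) / (n + 1)` split the sum into two sums of
the shape `∑ₜ (-1)^t / (t! (d - t)! (x + t))`. Times `(-1)^d d!` this is the `d`-th forward
difference of `u ↦ 1/u` at `x`, so the sum equals `1 / P(x)` with `P(x) = x (x + 1) ⋯ (x + d)`.
Hence `(n + 1) S = 1 / P(j + 1) + (-1)^d / P(n - k)`, which is positive for even `d`, and for odd
`d` has the sign of `P(n - k) - P(j + 1)`, i.e. of `(n - k) - (j + 1)`, since `P` increases on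
`x > 0`.
-/

open Finset Polynomial fwdDiff

lemma neg_one_pow_sub_of_le {M : Type*} [Monoid M] [HasDistribNeg M] {d t : ℕ} (htd : t ≤ d) :
    (-1 : M) ^ (d - t) = (-1) ^ d * (-1) ^ t := by
  rw [← Nat.sub_add_cancel htd, pow_add, mul_assoc, ← pow_add, ← two_mul, pow_mul, neg_one_sq,
    one_pow, mul_one, Nat.add_sub_cancel]

theorem ascPochhammer_eval_strictMonoOn {S : Type*} [Semiring S] [PartialOrder S]
    [IsStrictOrderedRing S] (d : ℕ) :
    StrictMonoOn (fun x : S ↦ (ascPochhammer S (d + 1)).eval x) (Set.Ioi 0) := by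
  intro x hx y hy hxy
  induction d with
  | zero => simpa using hxy
  | succ d ih =>
    simp only [ascPochhammer_succ_eval (d + 1)]
    exact mul_lt_mul'' ih (by gcongr) (ascPochhammer_pos _ _ hx).le
      (add_nonneg hx.le (Nat.cast_nonneg _))

section Field

variable {K : Type*} [Field K]

lemma ascPochhammer_eval_ne_zero_of_succ {d : ℕ} {x : K}
    (hx : (ascPochhammer K (d + 2)).eval x ≠ 0) :
    (ascPochhammer K (d + 1)).eval x ≠ 0 ∧ (ascPochhammer K (d + 1)).eval (x + 1) ≠ 0 := by
  have hx' := hx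
  rw [ascPochhammer_succ_eval] at hx
  rw [ascPochhammer_succ_left, eval_mul, eval_comp] at hx'
  simp only [eval_X, eval_add, eval_one] at hx'
  exact ⟨left_ne_zero_of_mul hx, right_ne_zero_of_mul hx'⟩

theorem fwdDiff_iter_inv (d : ℕ) {x : K} (hx : (ascPochhammer K (d + 1)).eval x ≠ 0) :
    (Δ_[1])^[d] (fun u : K ↦ u⁻¹) x =
      (-1) ^ d * d.factorial / (ascPochhammer K (d + 1)).eval x := by
  induction d generalizing x with
  | zero => simp
  | succ d ih =>
    obtain ⟨h₀, h₁⟩ := ascPochhammer_eval_ne_zero_of_succ hx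
    have hleft : (ascPochhammer K (d + 1 + 1)).eval x =
        x * (ascPochhammer K (d + 1)).eval (x + 1) := by
      rw [ascPochhammer_succ_left, eval_mul, eval_comp]; simp
    have hright : (ascPochhammer K (d + 1 + 1)).eval x =
        (ascPochhammer K (d + 1)).eval x * (x + (d + 1)) := by
      rw [ascPochhammer_succ_eval]; push_cast; ring
    rw [Function.iterate_succ_apply', fwdDiff, ih h₀, ih h₁, div_sub_div _ _ h₁ h₀,
      div_eq_div_iff (mul_ne_zero h₁ h₀) hx]
    push_cast [Nat.factorial_succ]
    linear_combination (-1) ^ d * d.factorial *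
      ((ascPochhammer K (d + 1)).eval x * hleft - (ascPochhammer K (d + 1)).eval (x + 1) * hright)

variable [CharZero K]

theorem sum_neg_one_pow_div_factorials_mul_add (d : ℕ) {x : K}
    (hx : (ascPochhammer K (d + 1)).eval x ≠ 0) :
    ∑ t ∈ range (d + 1), (-1) ^ t / (t.factorial * (d - t).factorial * (x + t)) =
      1 / (ascPochhammer K (d + 1)).eval x := by
  have hc : ((-1) ^ d * d.factorial : K) ≠ 0 := by simp [Nat.factorial_ne_zero]
  have hdiff := fwdDiff_iter_eq_sum_shift 1 (fun u : K ↦ u⁻¹) d x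
  rw [fwdDiff_iter_inv d hx] at hdiff
  refine mul_left_cancel₀ hc ?_
  rw [mul_sum, ← mul_div_assoc, mul_one, hdiff]
  refine sum_congr rfl fun t ht ↦ ?_
  have htd : t ≤ d := Nat.lt_succ_iff.mp (mem_range.mp ht)
  rw [zsmul_eq_mul, nsmul_eq_mul, mul_one]
  push_cast
  rw [Nat.cast_choose K htd, neg_one_pow_sub_of_le htd]
  simp only [div_eq_mul_inv, mul_inv]
  ring

theorem sum_neg_one_pow_div_factorials_mul_sub (d : ℕ) {y : K}
    (hy : (ascPochhammer K (d + 1)).eval y ≠ 0) :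
    ∑ t ∈ range (d + 1), (-1) ^ t / (t.factorial * (d - t).factorial * (y + d - t)) =
      (-1) ^ d / (ascPochhammer K (d + 1)).eval y := by
  rw [← sum_range_reflect, div_eq_mul_one_div, ← sum_neg_one_pow_div_factorials_mul_add d hy,
    mul_sum]
  refine sum_congr rfl fun t ht ↦ ?_
  have htd : t ≤ d := Nat.lt_succ_iff.mp (mem_range.mp ht)
  rw [Nat.add_sub_cancel, Nat.sub_sub_self htd, Nat.cast_sub htd, neg_one_pow_sub_of_le htd]
  ring_nf

end Field

theorem beta_sum_eq (n k j : ℕ) (hjk : j ≤ k) (hkn : k < n) :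
    ∑ m ∈ Icc j k, (-1 : ℝ) ^ (j + m) /
        (((m - j).factorial : ℝ) * ((k - m).factorial : ℝ) * ((m : ℝ) + 1) * ((n : ℝ) - m)) =
      (1 / (ascPochhammer ℝ (k - j + 1)).eval ((j : ℝ) + 1) +
        (-1) ^ (k - j) / (ascPochhammer ℝ (k - j + 1)).eval ((n : ℝ) - k)) / (n + 1) := by
  obtain ⟨d, rfl⟩ : ∃ d, k = j + d := ⟨k - j, by omega⟩
  have hnk : ((j + d : ℕ) : ℝ) < n := by exact_mod_cast hkn
  have hP₁ := ascPochhammer_pos (d + 1) ((j : ℝ) + 1) (by positivity)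
  have hP₂ := ascPochhammer_pos (d + 1) ((n : ℝ) - (j + d : ℕ)) (by linarith)
  rw [Nat.add_sub_cancel_left, ← sum_neg_one_pow_div_factorials_mul_add d hP₁.ne',
    ← sum_neg_one_pow_div_factorials_mul_sub d hP₂.ne', ← sum_add_distrib, sum_div,
    ← Ico_add_one_right_eq_Icc, sum_Ico_eq_sum_range, show j + d + 1 - j = d + 1 by omega]
  refine sum_congr rfl fun t ht ↦ ?_
  have hjtn : (n : ℝ) - (j + t : ℕ) ≠ 0 :=
    sub_ne_zero.2 (by have := mem_range.mp ht; norm_cast; omega)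
  have hreflect : (n : ℝ) - (j + d : ℕ) + d - t = n - (j + t : ℕ) := by push_cast; ring
  rw [Nat.add_sub_cancel_left, Nat.add_sub_add_left, ← add_assoc, ← two_mul, pow_add, pow_mul,
    neg_one_sq, one_pow, one_mul, hreflect]
  field_simp
  push_cast
  ring

/-- For integers `n > k ≥ j ≥ 0`, the sum
`S = ∑_{m=j}^{k} (-1)^{j+m} / ((m-j)!(k-m)!(m+1)(n-m))`
is strictly negative iff `k − j` is odd and `j > n − k − 1`; moreover `S > 0` when
`k − j` is even and `S ≥ 0` when `k − j` is odd and `j ≤ n − k − 1`. -/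
theorem beta_sum_sign (n k j : ℕ) (hjk : j ≤ k) (hkn : k < n) :
    ((∑ m ∈ Finset.Icc j k,
        (-1 : ℝ) ^ (j + m) /
          (((m - j).factorial : ℝ) * ((k - m).factorial : ℝ) * ((m : ℝ) + 1) * ((n : ℝ) - m))
        < 0) ↔ (Odd (k - j) ∧ n - k - 1 < j)) ∧
    (Even (k - j) →
      0 < ∑ m ∈ Finset.Icc j k,
        (-1 : ℝ) ^ (j + m) /
          (((m - j).factorial : ℝ) * ((k - m).factorial : ℝ) * ((m : ℝ) + 1) * ((n : ℝ) - m))) ∧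
    (Odd (k - j) → j ≤ n - k - 1 →
      0 ≤ ∑ m ∈ Finset.Icc j k,
        (-1 : ℝ) ^ (j + m) /
          (((m - j).factorial : ℝ) * ((k - m).factorial : ℝ) * ((m : ℝ) + 1) * ((n : ℝ) - m))) := by
  rw [beta_sum_eq n k j hjk hkn]
  have hx : (0 : ℝ) < j + 1 := by positivity
  have hy : (0 : ℝ) < n - k := sub_pos.2 (by exact_mod_cast hkn)
  have hn : (0 : ℝ) < n + 1 := by positivity
  set a := (ascPochhammer ℝ (k - j + 1)).eval ((j : ℝ) + 1) with ha
  set b := (ascPochhammer ℝ (k - j + 1)).eval ((n : ℝ) - k) with hb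
  have hapos : 0 < a := ascPochhammer_pos _ _ hx
  have hbpos : 0 < b := ascPochhammer_pos _ _ hy
  rcases Nat.even_or_odd (k - j) with he | ho
  · have hS : 0 < (1 / a + (-1) ^ (k - j) / b) / (n + 1) := by rw [he.neg_one_pow]; positivity
    have hne := Nat.not_odd_iff_even.2 he
    exact ⟨iff_of_false hS.not_gt (hne ·.1), fun _ ↦ hS, fun h ↦ absurd h hne⟩
  · have hlt : (n : ℝ) - k < j + 1 ↔ n - k - 1 < j := by
      rw [← Nat.cast_sub hkn.le]; norm_cast; omega
    have hneg : (1 / a + (-1) ^ (k - j) / b) / (n + 1) < 0 ↔ n - k - 1 < j := by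
      rw [ho.neg_one_pow, div_neg_iff, neg_div, ← sub_eq_add_neg, sub_neg,
        one_div_lt_one_div hapos hbpos, ha, hb,
        (ascPochhammer_eval_strictMonoOn (k - j)).lt_iff_lt hy hx, hlt]
      simp [hn, hn.not_gt]
    exact ⟨hneg.trans (and_iff_right ho).symm, fun h ↦ absurd ho (Nat.not_odd_iff_even.2 h),
      fun _ hle ↦ not_lt.1 (mt hneg.1 (by omega))⟩
end

section
/- For integers 0 ≤ j ≤ k < n, one has ∑_{s=0}^{k-j} (-1)^s C(k-j,s) / (s+j-n) = − ∫_{(1,∞)} (1-r)^{k-j} · r^{j-n-1} dr, where each denominator s+j−n is a nonzero (negative) integer and the integral is the Lebesgue integral over the ray (1,∞) with r^{j-n-1} an integer (negative) power of r. -/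
/-! Expand `(1 - r)^m` by the binomial theorem and integrate term by term, using
`∫_{(1,∞)} r^b dr = -1/(b + 1)` for `b < -1`. -/

open MeasureTheory Finset Set

theorem one_sub_pow_eq_sum_range {R : Type*} [CommRing R] (r : R) (m : ℕ) :
    (1 - r) ^ m = ∑ s ∈ range (m + 1), (-1) ^ s * (m.choose s : R) * r ^ s := by
  rw [sub_eq_neg_add, add_pow]
  refine sum_congr rfl fun s _ => ?_
  rw [neg_pow, one_pow]
  ring

theorem integral_Ioi_one_one_sub_pow_mul_rpow (m : ℕ) {a : ℝ} (ha : a + m < -1) :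
    ∫ r in Ioi (1 : ℝ), (1 - r) ^ m * r ^ a
      = -∑ s ∈ range (m + 1), (-1) ^ s * (m.choose s : ℝ) / (s + a + 1) := by
  have hlt : ∀ s ∈ range (m + 1), (s : ℝ) + a < -1 := fun s hs => by
    have : (s : ℝ) ≤ m := by exact_mod_cast Nat.lt_succ_iff.mp (mem_range.mp hs)
    linarith
  have hexpand : EqOn (fun r : ℝ => (1 - r) ^ m * r ^ a)
      (fun r => ∑ s ∈ range (m + 1), (-1) ^ s * (m.choose s : ℝ) * r ^ ((s : ℝ) + a))
      (Ioi 1) := fun r hr => by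
    have hr : (0 : ℝ) < r := one_pos.trans hr
    simp only [one_sub_pow_eq_sum_range, sum_mul, Real.rpow_add hr, Real.rpow_natCast, mul_assoc]
  rw [setIntegral_congr_fun measurableSet_Ioi hexpand,
    integral_finsetSum _ fun s hs => (integrableOn_Ioi_rpow_of_lt (hlt s hs) one_pos).const_mul _,
    ← sum_neg_distrib]
  refine sum_congr rfl fun s hs => ?_
  rw [integral_const_mul, integral_Ioi_rpow_of_lt (hlt s hs) one_pos, Real.one_rpow, add_assoc]
  ring

/-- For `0 ≤ j ≤ k < n`,
`∑_{s=0}^{k-j} (-1)^s C(k-j,s)/(s+j-n) = − ∫_{(1,∞)} (1-r)^{k-j} r^{j-n-1} dr`. -/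
theorem alternating_sum_eq_neg_tail_integral (n k j : ℕ) (hjk : j ≤ k) (hkn : k < n) :
    ∑ s ∈ Finset.range (k - j + 1),
        (-1 : ℝ) ^ s * ((k - j).choose s : ℝ) / ((s : ℝ) + (j : ℝ) - (n : ℝ))
      = - ∫ r in Set.Ioi (1 : ℝ), (1 - r) ^ (k - j) * r ^ ((j : ℤ) - (n : ℤ) - 1) := by
  have hexp : ((j : ℝ) - n - 1) + (k - j : ℕ) < -1 := by
    have : (k : ℝ) < n := by exact_mod_cast hkn
    rw [Nat.cast_sub hjk]
    linarith
  simp_rw [← Real.rpow_intCast, Int.cast_sub, Int.cast_natCast, Int.cast_one,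
    integral_Ioi_one_one_sub_pow_mul_rpow (k - j) hexp, neg_neg]
  refine sum_congr rfl fun s _ => ?_
  ring_nf
end

section
/- For integers 0 ≤ ℓ ≤ k < n, the following identity of real numbers holds: ∑_{m=ℓ}^{k} (-1)^{ℓ+m} C(n-m,k-m) · C(n-ℓ,m-ℓ) · (n-k)(k+1) / ( 2(m+1)(n-m) ) = (n-k)·C(n,k) / ( 2(n+1)·C(n,ℓ) ) + (-1)^{k-ℓ} (k+1) / ( 2(n+1) ). -/
/-!
After `C(n-m,k-m) (n-k) = C(n-m-1,k-m) (n-m)` and the shift `m = ℓ + i`, `N = n - ℓ`,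
`q = k - ℓ`, the sum is `(k+1)/2 · T q` with `T q = ∑ᵢ (-1)^i C(N,i) C(N-1-i,q-i) / (ℓ+i+1)`.
Pascal's rule in the last factor gives `T (q+1) + T q = C(N,q+1) B(q+1)`, where
`B p = ∑ᵢ (-1)^i C(p,i) / (ℓ+i+1) = ∫₀¹ x^ℓ (1-x)^p dx = 1 / ((ℓ+p+1) C(ℓ+p,ℓ))`
is a Beta integral; induction on `q` then yields the closed form.
-/

open Finset Nat

section

variable {K : Type*} [Field K] [CharZero K]

theorem sum_range_neg_one_pow_mul_choose_div (p l : ℕ) :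
    ∑ i ∈ range (p + 1), (-1 : K) ^ i * p.choose i / (l + i + 1)
      = 1 / ((l + p + 1) * (l + p).choose l) := by
  induction p generalizing l with
  | zero => simp
  | succ p ih =>
    have hl : (l + 1 : K) ≠ 0 := by exact_mod_cast l.succ_ne_zero
    have hp : (p + 1 : K) ≠ 0 := by exact_mod_cast p.succ_ne_zero
    have hlp : (l + 1 + p + 1 : K) ≠ 0 := by exact_mod_cast (l + 1 + p).succ_ne_zero
    have e1 : ((l + p + 1).choose (l + 1) : K) = (l + p + 1) * (l + p).choose l / (l + 1) := by
      rw [eq_div_iff hl]; exact_mod_cast (add_one_mul_choose_eq (l + p) l).symm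
    have e2 : ((l + p + 1).choose l : K) = (l + p).choose l * (l + p + 1) / (p + 1) := by
      rw [eq_div_iff hp]
      have := choose_mul_succ_eq (l + p) l
      rw [show l + p + 1 - l = p + 1 by omega] at this
      exact_mod_cast this.symm
    calc _ = ∑ i ∈ range (p + 2), ((p + 1).choose i : K) * ((-1) ^ i / (l + i + 1)) :=
          sum_congr rfl fun i _ => by ring
      _ = ∑ i ∈ range (p + 1), (p.choose i : K) * ((-1) ^ i / (l + i + 1))
          + ∑ i ∈ range (p + 1), (p.choose i : K) * ((-1) ^ (i + 1) / (l + ↑(i + 1) + 1)) :=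
          sum_choose_succ_mul (fun i _ => (-1 : K) ^ i / (l + i + 1)) p
      _ = 1 / ((l + p + 1) * (l + p).choose l)
          - 1 / (((l + 1 : ℕ) + p + 1) * (l + 1 + p).choose (l + 1)) := by
          rw [← ih, ← ih, sub_eq_add_neg, ← sum_neg_distrib]
          congr 1 <;> refine sum_congr rfl fun i _ => ?_ <;> push_cast <;> ring
      _ = _ := by
          rw [show l + 1 + p = l + p + 1 by ring, show l + (p + 1) = l + p + 1 by ring, e1, e2]
          push_cast
          rw [show (l : K) + (p + 1) + 1 = l + 1 + p + 1 by ring]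
          field_simp
          ring

theorem sum_range_neg_one_pow_mul_choose_mul_choose_div (N p l : ℕ) :
    ∑ i ∈ range (p + 1), (-1 : K) ^ i * N.choose i * (N - i).choose (p - i) / (l + i + 1)
      = N.choose p / ((l + p + 1) * (l + p).choose l) := by
  rw [div_eq_mul_one_div, ← sum_range_neg_one_pow_mul_choose_div, mul_sum]
  refine sum_congr rfl fun i hi => ?_
  rw [mul_assoc _ (N.choose i : K), ← cast_mul, ← choose_mul (mem_range_succ_iff.1 hi),
    cast_mul]
  ring

theorem sum_range_neg_one_pow_mul_choose_mul_choose_sub_one_div {N q : ℕ} (l : ℕ)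
    (hqN : q < N) :
    ∑ i ∈ range (q + 1), (-1 : K) ^ i * N.choose i * (N - 1 - i).choose (q - i) / (l + i + 1)
      = ((-1) ^ q + N.choose (q + 1) / (l + q + 1).choose l) / (N + l + 1) := by
  have hNl : (N + l + 1 : K) ≠ 0 := by exact_mod_cast (N + l).succ_ne_zero
  induction q with
  | zero =>
    simp
    field_simp
    ring
  | succ q ih =>
    have pascal : ∑ i ∈ range (q + 2),
          (-1 : K) ^ i * N.choose i * (N - 1 - i).choose (q + 1 - i) / (l + i + 1)
        = ∑ i ∈ range (q + 2),
            (-1 : K) ^ i * N.choose i * (N - i).choose (q + 1 - i) / (l + i + 1)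
          - ∑ i ∈ range (q + 1),
            (-1 : K) ^ i * N.choose i * (N - 1 - i).choose (q - i) / (l + i + 1) := by
      rw [sum_range_succ, sum_range_succ _ (q + 1), add_sub_right_comm, ← sum_sub_distrib]
      congr 1
      · refine sum_congr rfl fun i hi => ?_
        have hi : i < q + 1 := mem_range.1 hi
        rw [show N - i = N - 1 - i + 1 by omega, show q + 1 - i = q - i + 1 by omega,
          choose_succ_succ', cast_add]
        ring
      · simp
    rw [pascal, sum_range_neg_one_pow_mul_choose_mul_choose_div, ih (by omega)]
    have hq : (q + 2 : K) ≠ 0 := by exact_mod_cast (q + 1).succ_ne_zero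
    have hlq : (l + q + 2 : K) ≠ 0 := by exact_mod_cast (l + q + 1).succ_ne_zero
    have e1 : (N.choose (q + 2) : K) = N.choose (q + 1) * (N - (q + 1)) / (q + 2) := by
      rw [eq_div_iff hq, show (N : K) - (q + 1) = ((N - (q + 1) : ℕ) : K) by
        push_cast [cast_sub hqN.le]; ring]
      exact_mod_cast choose_succ_right_eq N (q + 1)
    have e2 : ((l + q + 2).choose l : K) = (l + q + 1).choose l * (l + q + 2) / (q + 2) := by
      rw [eq_div_iff hq]
      have := choose_mul_succ_eq (l + q + 1) l
      rw [show l + q + 1 + 1 - l = q + 2 by omega] at this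
      exact_mod_cast this.symm
    rw [show l + (q + 1) = l + q + 1 by ring, show l + q + 1 + 1 = l + q + 2 by ring, e1, e2]
    push_cast
    rw [show (l : K) + (q + 1) + 1 = l + q + 2 by ring]
    field_simp
    ring

theorem cast_choose_sub_mul_div_sub {n k m : ℕ} (hmk : m ≤ k) (hkn : k < n) :
    ((n - m).choose (k - m) : K) * (n - k) / (n - m) = (n - m - 1).choose (k - m) := by
  have h := choose_mul_succ_eq (n - m - 1) (k - m)
  rw [show n - m - 1 + 1 = n - m by omega, show n - m - (k - m) = n - k by omega] at h
  have hnm : (n - m : K) ≠ 0 := sub_ne_zero.2 (by exact_mod_cast (hmk.trans_lt hkn).ne')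
  rw [div_eq_iff hnm, ← cast_sub (hmk.trans hkn.le), ← cast_sub hkn.le]
  exact_mod_cast h.symm

theorem cast_choose_mul_sub_div_choose {n k l : ℕ} (hlk : l ≤ k) (hkn : k < n) :
    (n.choose k : K) * (n - k) / n.choose l
      = (k + 1) * (n - l).choose (k + 1 - l) / (k + 1).choose l := by
  have h1 := choose_succ_right_eq n k
  have h2 := choose_mul (n := n) (k := k + 1) (s := l) (by omega)
  have hl : (n.choose l : K) ≠ 0 := by exact_mod_cast (choose_pos (by omega)).ne'
  have hkl : ((k + 1).choose l : K) ≠ 0 := by exact_mod_cast (choose_pos (by omega)).ne'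
  rw [div_eq_div_iff hl hkl, ← cast_sub hkn.le]
  have key : n.choose k * (n - k) * (k + 1).choose l
      = (k + 1) * (n - l).choose (k + 1 - l) * n.choose l := by
    rw [← h1, mul_right_comm, h2]; ring
  exact_mod_cast key

theorem sum_Icc_neg_one_pow_mul_choose_mul_choose_div {n k l : ℕ} (hlk : l ≤ k) (hkn : k < n) :
    ∑ m ∈ Icc l k,
        (-1 : K) ^ (l + m) * (n - m - 1).choose (k - m) * (n - l).choose (m - l) / (m + 1)
      = ((-1) ^ (k - l) + (n - l).choose (k + 1 - l) / (k + 1).choose l) / (n + 1) := by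
  have core := sum_range_neg_one_pow_mul_choose_mul_choose_sub_one_div (K := K) (N := n - l)
    (q := k - l) l (by omega)
  rw [show l + (k - l) + 1 = k + 1 by omega, show k - l + 1 = k + 1 - l by omega,
    cast_sub (hlk.trans hkn.le), sub_add_cancel] at core
  rw [← core, ← Ico_add_one_right_eq_Icc, sum_Ico_eq_sum_range,
    show k + 1 - l = k - l + 1 by omega]
  refine sum_congr rfl fun i _ => ?_
  rw [show n - (l + i) - 1 = n - l - 1 - i by omega, show k - (l + i) = k - l - i by omega,
    Nat.add_sub_cancel_left, ← add_assoc, ← two_mul, pow_add, pow_mul, neg_one_sq, one_pow,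
    one_mul]
  push_cast
  ring

end

/-- For `0 ≤ ℓ ≤ k < n`,
`∑_{m=ℓ}^{k} (-1)^{ℓ+m} C(n-m,k-m) C(n-ℓ,m-ℓ) (n-k)(k+1)/(2(m+1)(n-m))
  = (n-k) C(n,k) / (2(n+1) C(n,ℓ)) + (-1)^{k-ℓ} (k+1)/(2(n+1))`. -/
theorem coefficient_closed_form (n k l : ℕ) (hlk : l ≤ k) (hkn : k < n) :
    ∑ m ∈ Finset.Icc l k,
        (-1 : ℝ) ^ (l + m) * ((n - m).choose (k - m) : ℝ) * ((n - l).choose (m - l) : ℝ) *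
          (((n : ℝ) - k) * ((k : ℝ) + 1)) / (2 * ((m : ℝ) + 1) * ((n : ℝ) - m))
      = ((n : ℝ) - k) * (n.choose k : ℝ) / (2 * ((n : ℝ) + 1) * (n.choose l : ℝ))
        + (-1 : ℝ) ^ (k - l) * ((k : ℝ) + 1) / (2 * ((n : ℝ) + 1)) := by
  calc _ = ∑ m ∈ Icc l k, ((k : ℝ) + 1) / 2 *
          ((-1) ^ (l + m) * (n - m - 1).choose (k - m) * (n - l).choose (m - l) / (m + 1)) := by
        refine sum_congr rfl fun m hm => ?_
        rw [← cast_choose_sub_mul_div_sub (mem_Icc.1 hm).2 hkn]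
        field_simp
    _ = ((k : ℝ) + 1) / 2 *
          (((-1) ^ (k - l) + (n - l).choose (k + 1 - l) / (k + 1).choose l) / (n + 1)) := by
        rw [← mul_sum, sum_Icc_neg_one_pow_mul_choose_mul_choose_div hlk hkn]
    _ = _ := by
        rw [mul_comm ((n : ℝ) - k), mul_comm (2 * _), ← div_div,
          cast_choose_mul_sub_div_choose hlk hkn]
        field_simp
        ring
end

section
/- For all integers 0 ≤ m < k, ∑_{t=0}^{k-m-1} (t+1) · C(k-t, m) = (k+1-m) · C(k+1, m+1) − (m+1) · C(k+1, m+2) − (k+1-m) (an identity in ℤ). -/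
/-!
Put `j = k - t`. Peeling off the constant part of the weight `t + 1` and applying the
hockey-stick identity once per step shows, by induction on `k - m`, that the weighted sum taken
over all `j` from `m` to `k` is `C(k+2, m+2)`; the term `j = m` of that sum is `k + 1 - m`.
The stated right-hand side is `C(k+2, m+2) - (k + 1 - m)` rewritten with Pascal's rule and the
absorption identity `(k - m) C(k+1, m+1) = (m+2) C(k+1, m+2)`.
-/

open Finset

namespace Nat

theorem sum_range_sub_add_choose (n m : ℕ) :
    ∑ t ∈ range (n + 1), (n - t + m).choose m = (n + m + 1).choose (m + 1) := by
  rw [← sum_range_reflect, ← sum_range_add_choose]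
  refine sum_congr rfl fun t ht => ?_
  rw [show n - (n + 1 - 1 - t) = t by have := mem_range.mp ht; omega]

theorem sum_range_succ_mul_sub_add_choose (n m : ℕ) :
    ∑ t ∈ range (n + 1), (t + 1) * (n - t + m).choose m = (n + m + 2).choose (m + 2) := by
  induction n with
  | zero => simp
  | succ n ih =>
    have hstep : ∀ t ∈ range (n + 1), (t + 1 + 1) * (n + 1 - (t + 1) + m).choose m
        = (t + 1) * (n - t + m).choose m + (n - t + m).choose m := fun t _ => by
      rw [Nat.add_sub_add_right, add_one_mul]
    rw [sum_range_succ', sum_congr rfl hstep, sum_add_distrib, ih, sum_range_sub_add_choose,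
      Nat.sub_zero, zero_add, one_mul, add_right_comm n 1 m, add_assoc, add_comm (choose _ (m + 1)),
      ← choose_succ_succ', add_comm, ← choose_succ_succ']

end Nat

/-- For `0 ≤ m < k`,
`∑_{t=0}^{k-m-1} (t+1)·C(k-t,m)
  = (k+1-m)·C(k+1,m+1) − (m+1)·C(k+1,m+2) − (k+1-m)` in `ℤ`. -/
theorem weighted_choose_sum (k m : ℕ) (hmk : m < k) :
    ∑ t ∈ Finset.range (k - m), ((t : ℤ) + 1) * ((k - t).choose m : ℤ)
      = ((k : ℤ) + 1 - m) * ((k + 1).choose (m + 1) : ℤ)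
        - ((m : ℤ) + 1) * ((k + 1).choose (m + 2) : ℤ)
        - ((k : ℤ) + 1 - m) := by
  obtain ⟨n, rfl⟩ := Nat.exists_eq_add_of_le' hmk.le
  have hsum := Nat.sum_range_succ_mul_sub_add_choose n m
  rw [sum_range_succ, Nat.sub_self, zero_add, Nat.choose_self, mul_one] at hsum
  have hpascal : (n + m + 2).choose (m + 2)
      = (n + m + 1).choose (m + 1) + (n + m + 1).choose (m + 2) :=
    Nat.choose_succ_succ' _ _
  have habsorb : (n + m + 1).choose (m + 2) * (m + 2) = (n + m + 1).choose (m + 1) * n := by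
    rw [Nat.choose_succ_right_eq, show n + m + 1 - (m + 1) = n by omega]
  calc ∑ t ∈ range (n + m - m), ((t : ℤ) + 1) * ((n + m - t).choose m : ℤ)
      = ((∑ t ∈ range n, (t + 1) * (n - t + m).choose m : ℕ) : ℤ) := by
        rw [Nat.add_sub_cancel]
        push_cast
        refine sum_congr rfl fun t ht => ?_
        rw [Nat.sub_add_comm (mem_range.mp ht).le]
    _ = _ := by
        zify at hsum hpascal habsorb
        push_cast
        linear_combination hsum + hpascal + habsorb
end
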